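/- arXiv:1206.5987 — 4 statements merged into one kernel-verified Lean document; each statement's English description precedes it below -/
import Mathlib

section
/- Let k ∈ ℝ, let D ⊂ ℝ³ be a bounded open set, and let φ : ℝ³ → ℂ be continuously differentiable with compact support contained in D. Then for every x ∈ ℝ³ the function x ↦ ∫_D g(x,y)φ(y) dy is differentiable and ∇ₓ ∫_D g(x,y) φ(y) dy = ∫_D g(x,y) ∇φ(y) dy. -/
/- STATEMENT 2: For k ∈ ℝ, D ⊂ ℝ³ bounded open, φ : ℝ³ → ℂ of class C¹ with
compact support contained in D, the map x ↦ ∫_D g(x,y)φ(y) dy is differentiable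
and its gradient equals ∫_D g(x,y)∇φ(y) dy (componentwise), where
g(x,y) = e^{ik|x−y|}/(4π|x−y|). -/

noncomputable section

open Real Complex MeasureTheory

abbrev R3 : Type := EuclideanSpace ℝ (Fin 3)

/-- Partial derivative ∂ᵢ of a scalar function. -/
def pd (i : Fin 3) (f : R3 → ℂ) (x : R3) : ℂ :=
  fderiv ℝ f x (EuclideanSpace.single i (1 : ℝ))

/-- The weakly singular kernel g(x,y) = e^{ik|x−y|}/(4π|x−y|). -/
def g (k : ℝ) (x y : R3) : ℂ :=
  Complex.exp (Complex.I * (k : ℂ) * (‖x - y‖ : ℝ)) / (4 * (Real.pi : ℂ) * (‖x - y‖ : ℝ))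

/-!
The kernel `g k x y` depends only on `x - y` and has modulus `(4π)⁻¹ ‖x - y‖⁻¹`, which is locally
integrable in ℝ³ (in polar coordinates `r⁻¹ · r²` is integrable near `0`). As `φ` vanishes off `D`,
the potential is the convolution of this kernel with the compactly supported `C¹` function `φ`, and
the derivative of such a convolution falls on the smooth factor.
-/

open Metric Module Convolution

section NormRpowNeg

variable {E : Type*} [NormedAddCommGroup E] [NormedSpace ℝ E] [FiniteDimensional ℝ E]
  [MeasurableSpace E] [BorelSpace E] [Nontrivial E] (μ : Measure E) [μ.IsAddHaarMeasure]

theorem integrableOn_ball_norm_rpow_neg {s : ℝ} (hs : s < finrank ℝ E) {r : ℝ} (hr : 0 < r) :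
    IntegrableOn (fun x : E => ‖x‖ ^ (-s)) (ball 0 r) μ := by
  rw [integrableOn_fun_norm_addHaar μ (f := fun y => y ^ (-s))]
  have hd : 1 ≤ finrank ℝ E := finrank_pos
  have hexp : -1 < ((finrank ℝ E - 1 : ℕ) : ℝ) - s := by
    push_cast [hd]
    linarith
  refine ((intervalIntegral.integrableOn_Ioo_rpow_iff hr).2 hexp).congr_fun (fun y hy => ?_)
    measurableSet_Ioo
  rw [smul_eq_mul, ← Real.rpow_natCast, ← Real.rpow_add hy.1, sub_eq_add_neg]

theorem locallyIntegrable_norm_rpow_neg {s : ℝ} (hs : s < finrank ℝ E) :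
    LocallyIntegrable (fun x : E => ‖x‖ ^ (-s)) μ := by
  refine locallyIntegrable_iff.2 fun K hK => ?_
  obtain ⟨r, hr, hKr⟩ := hK.isBounded.subset_ball_lt 0 0
  exact (integrableOn_ball_norm_rpow_neg μ hs hr).mono_set hKr

end NormRpowNeg

section ConvolutionDeriv

variable {𝕜 G E E' F : Type*} [RCLike 𝕜] [NormedAddCommGroup E] [NormedSpace 𝕜 E]
  [NormedAddCommGroup E'] [NormedSpace 𝕜 E'] [NormedAddCommGroup F] [NormedSpace ℝ F]
  [NormedSpace 𝕜 F] [NormedAddCommGroup G] [NormedSpace 𝕜 G] [MeasurableSpace G] [BorelSpace G]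
  {μ : Measure G} [SFinite μ] [μ.IsAddLeftInvariant] (L : E →L[𝕜] E' →L[𝕜] F)
  {f : G → E} {φ : G → E'}

theorem HasCompactSupport.fderiv_convolution_right_apply (hφc : HasCompactSupport φ)
    (hf : LocallyIntegrable f μ) (hφ : ContDiff 𝕜 1 φ) (x v : G) :
    fderiv 𝕜 (f ⋆[L, μ] φ) x v = (f ⋆[L, μ] fun y => fderiv 𝕜 φ y v) x := by
  rw [(hφc.hasFDerivAt_convolution_right L hf hφ x).fderiv,
    convolution_precompR_apply L hf (hφc.fderiv (𝕜 := 𝕜)) (hφ.continuous_fderiv one_ne_zero)]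

end ConvolutionDeriv

theorem setIntegral_mul_sub_eq_convolution {G : Type*} [NormedAddCommGroup G] [MeasurableSpace G]
    {μ : Measure G} [μ.IsAddLeftInvariant] [μ.IsNegInvariant] [MeasurableNeg G] [MeasurableAdd G]
    {K ψ : G → ℂ} {D : Set G} (hψ : ∀ y ∉ D, ψ y = 0) (x : G) :
    ∫ y in D, K (x - y) * ψ y ∂μ = (K ⋆[ContinuousLinearMap.mul ℝ ℂ, μ] ψ) x := by
  rw [setIntegral_eq_integral_of_forall_compl_eq_zero fun y hy => by rw [hψ y hy, mul_zero],
    convolution_eq_swap]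
  rfl

def helmholtzKernel (k : ℝ) (z : R3) : ℂ :=
  Complex.exp (Complex.I * (k : ℂ) * (‖z‖ : ℝ)) / (4 * (Real.pi : ℂ) * (‖z‖ : ℝ))

theorem norm_helmholtzKernel (k : ℝ) (z : R3) :
    ‖helmholtzKernel k z‖ = (4 * π)⁻¹ * ‖z‖ ^ (-1 : ℝ) := by
  rw [helmholtzKernel, norm_div, Complex.norm_exp, Real.rpow_neg_one]
  simp [abs_of_pos Real.pi_pos, mul_comm]

theorem locallyIntegrable_helmholtzKernel (k : ℝ) :
    LocallyIntegrable (helmholtzKernel k) volume := by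
  have hmeas : Measurable (helmholtzKernel k) := by unfold helmholtzKernel; fun_prop
  have hdim : (1 : ℝ) < finrank ℝ R3 := by simp
  refine ((locallyIntegrable_norm_rpow_neg volume hdim).smul (4 * π)⁻¹).mono
    hmeas.aestronglyMeasurable (.of_forall fun z => ?_)
  rw [norm_helmholtzKernel, Pi.smul_apply, smul_eq_mul, Real.norm_of_nonneg (by positivity)]

theorem grad_of_single_layer_moves_to_density_general
    (k : ℝ) (D : Set R3)
    (φ : R3 → ℂ) (hφ : ContDiff ℝ 1 φ) (hφc : HasCompactSupport φ)
    (hφD : tsupport φ ⊆ D) :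
    ∀ x : R3,
      DifferentiableAt ℝ (fun z => ∫ y in D, g k z y * φ y) x ∧
      ∀ i : Fin 3,
        pd i (fun z => ∫ y in D, g k z y * φ y) x = ∫ y in D, g k x y * pd i φ y := by
  intro x
  have hK := locallyIntegrable_helmholtzKernel k
  have hpot : (fun z => ∫ y in D, g k z y * φ y) =
      helmholtzKernel k ⋆[ContinuousLinearMap.mul ℝ ℂ] φ :=
    funext <| setIntegral_mul_sub_eq_convolution (μ := volume) (K := helmholtzKernel k) fun y hy =>
      image_eq_zero_of_notMem_tsupport fun hyφ => hy (hφD hyφ)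
  refine ⟨hpot ▸ (hφc.hasFDerivAt_convolution_right _ hK hφ x).differentiableAt, fun i => ?_⟩
  have hpd : ∀ y ∉ D, pd i φ y = 0 := fun y hy => by
    rw [pd, fderiv_of_notMem_tsupport ℝ fun hyφ => hy (hφD hyφ)]
    rfl
  rw [pd, hpot, hφc.fderiv_convolution_right_apply _ hK hφ]
  exact (setIntegral_mul_sub_eq_convolution hpd x).symm

theorem grad_of_single_layer_moves_to_density
    (k : ℝ) (D : Set R3) (hD : IsOpen D) (hDb : Bornology.IsBounded D)
    (φ : R3 → ℂ) (hφ : ContDiff ℝ 1 φ) (hφc : HasCompactSupport φ)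
    (hφD : tsupport φ ⊆ D) :
    ∀ x : R3,
      DifferentiableAt ℝ (fun z => ∫ y in D, g k z y * φ y) x ∧
      ∀ i : Fin 3,
        pd i (fun z => ∫ y in D, g k z y * φ y) x = ∫ y in D, g k x y * pd i φ y :=
  grad_of_single_layer_moves_to_density_general k D φ hφ hφc hφD
end
end

section
/- Let K² : ℝ³ → ℂ be twice continuously differentiable with K²(x) ≠ 0 for all x, and let E : ℝ³ → ℂ³ be three times continuously differentiable. Suppose that for all x ∈ ℝ³: curl(curl E)(x) − ∇( (K²(x)·div E(x) + ∇K²(x)·E(x)) / K²(x) ) = K²(x)·E(x). Then the scalar function ψ(x) := div(K²·E)(x) / K²(x) = (K²(x)·div E(x) + ∇K²(x)·E(x)) / K²(x) satisfies Δψ(x) + K²(x)·ψ(x) = 0 for all x ∈ ℝ³. -/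
/-!
Since `∇ψ = curl curl E - K²E`, the Laplacian `Δψ = div ∇ψ` is `div curl (curl E) - div (K²E)`.
The first term vanishes by symmetry of second derivatives, and `div (K²E) = K²ψ` by the
definition of `ψ`.
-/

noncomputable section

open Real Complex

def lap (f : R3 → ℂ) (x : R3) : ℂ := ∑ i, pd i (pd i f) x

def vdiv (F : R3 → Fin 3 → ℂ) (x : R3) : ℂ := ∑ i, pd i (fun y => F y i) x

def curl (F : R3 → Fin 3 → ℂ) (x : R3) : Fin 3 → ℂ :=
  ![pd 1 (fun y => F y 2) x - pd 2 (fun y => F y 1) x,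
    pd 2 (fun y => F y 0) x - pd 0 (fun y => F y 2) x,
    pd 0 (fun y => F y 1) x - pd 1 (fun y => F y 0) x]

/-- Bilinear dot product of complex vectors (no conjugation). -/
def dotc (u v : Fin 3 → ℂ) : ℂ := ∑ i, u i * v i

def grad (f : R3 → ℂ) (x : R3) : Fin 3 → ℂ := fun i => pd i f x

lemma contDiff_pd {n : WithTop ℕ∞} {f : R3 → ℂ} (hf : ContDiff ℝ (n + 1) f) (i : Fin 3) :
    ContDiff ℝ n (pd i f) :=
  (hf.fderiv_right le_rfl).clm_apply contDiff_const

lemma pd_sub (i : Fin 3) {f g : R3 → ℂ} {x : R3} (hf : DifferentiableAt ℝ f x)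
    (hg : DifferentiableAt ℝ g x) :
    pd i (fun y => f y - g y) x = pd i f x - pd i g x := by
  simp only [pd, fderiv_fun_sub hf hg]
  rfl

lemma pd_mul (i : Fin 3) {f g : R3 → ℂ} {x : R3} (hf : DifferentiableAt ℝ f x)
    (hg : DifferentiableAt ℝ g x) :
    pd i (fun y => f y * g y) x = pd i f x * g x + f x * pd i g x := by
  simp only [pd, fderiv_fun_mul hf hg, add_apply, smul_apply, smul_eq_mul]
  ring

lemma pd_comm {f : R3 → ℂ} (hf : ContDiff ℝ 2 f) (i j : Fin 3) (x : R3) :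
    pd i (pd j f) x = pd j (pd i f) x := by
  have hd : DifferentiableAt ℝ (fderiv ℝ f) x :=
    (hf.fderiv_right (m := 1) (by norm_num)).differentiable (by norm_num) x
  have hsecond : ∀ v w : R3, fderiv ℝ (fun y => fderiv ℝ f y w) x v
      = fderiv ℝ (fderiv ℝ f) x v w := fun v w => by
    rw [fderiv_clm_apply hd (differentiableAt_const _)]
    simp
  unfold pd
  rw [hsecond, hsecond, hf.contDiffAt.isSymmSndFDerivAt (by norm_num)]

lemma contDiff_curl {n : WithTop ℕ∞} {F : R3 → Fin 3 → ℂ} (hF : ContDiff ℝ (n + 1) F) :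
    ContDiff ℝ n (curl F) := by
  have hpd (i j : Fin 3) : ContDiff ℝ n (pd j (fun y => F y i)) :=
    contDiff_pd (contDiff_pi.mp hF i) j
  refine contDiff_pi.mpr fun i => ?_
  fin_cases i
  exacts [(hpd 2 1).sub (hpd 1 2), (hpd 0 2).sub (hpd 2 0), (hpd 1 0).sub (hpd 0 1)]

lemma vdiv_curl {F : R3 → Fin 3 → ℂ} (hF : ContDiff ℝ 2 F) (x : R3) :
    vdiv (curl F) x = 0 := by
  have hFi (i : Fin 3) : ContDiff ℝ 2 (fun y => F y i) := contDiff_pi.mp hF i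
  have hpd (i j : Fin 3) : DifferentiableAt ℝ (pd j (fun y => F y i)) x :=
    (contDiff_pd (n := 1) (hFi i) j).differentiable one_ne_zero x
  simp only [vdiv, curl, Fin.sum_univ_three, Matrix.cons_val_zero, Matrix.cons_val_one,
    Matrix.cons_val_two, Matrix.tail_cons, Matrix.head_cons]
  rw [pd_sub 0 (hpd 2 1) (hpd 1 2), pd_sub 1 (hpd 0 2) (hpd 2 0), pd_sub 2 (hpd 1 0) (hpd 0 1),
    pd_comm (hFi 2) 0 1, pd_comm (hFi 1) 0 2, pd_comm (hFi 0) 1 2]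
  ring

lemma lap_eq_vdiv_grad (f : R3 → ℂ) (x : R3) : lap f x = vdiv (grad f) x := rfl

lemma vdiv_sub {F G : R3 → Fin 3 → ℂ} {x : R3} (hF : DifferentiableAt ℝ F x)
    (hG : DifferentiableAt ℝ G x) : vdiv (F - G) x = vdiv F x - vdiv G x := by
  simp only [vdiv, ← Finset.sum_sub_distrib]
  exact Finset.sum_congr rfl fun i _ =>
    pd_sub i (differentiableAt_pi.mp hF i) (differentiableAt_pi.mp hG i)

lemma vdiv_smul {K : R3 → ℂ} {F : R3 → Fin 3 → ℂ} {x : R3} (hK : DifferentiableAt ℝ K x)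
    (hF : DifferentiableAt ℝ F x) :
    vdiv (K • F) x = K x * vdiv F x + dotc (grad K x) (F x) := by
  simp only [vdiv, dotc, grad, Pi.smul_apply', Pi.smul_apply, smul_eq_mul, Finset.mul_sum,
    ← Finset.sum_add_distrib]
  exact Finset.sum_congr rfl fun i _ => by
    rw [pd_mul i hK (differentiableAt_pi.mp hF i)]
    ring

theorem psi_satisfies_helmholtz
    (K2 : R3 → ℂ) (E : R3 → Fin 3 → ℂ)
    (hK2 : ContDiff ℝ 2 K2) (hK2ne : ∀ x, K2 x ≠ 0) (hE : ContDiff ℝ 3 E)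
    (heq : ∀ x, ∀ i : Fin 3,
      curl (curl E) x i
        - pd i (fun y => (K2 y * vdiv E y + dotc (grad K2 y) (E y)) / K2 y) x
      = K2 x * E x i) :
    ∀ x, lap (fun y => (K2 y * vdiv E y + dotc (grad K2 y) (E y)) / K2 y) x
        + K2 x * ((K2 x * vdiv E x + dotc (grad K2 x) (E x)) / K2 x) = 0 := by
  intro x
  set ψ : R3 → ℂ := fun y => (K2 y * vdiv E y + dotc (grad K2 y) (E y)) / K2 y
  have hgrad : grad ψ = curl (curl E) - K2 • E := by
    funext y i
    simp only [grad, Pi.sub_apply, Pi.smul_apply', Pi.smul_apply, smul_eq_mul]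
    linear_combination -(heq y i)
  have hcurl : ContDiff ℝ 2 (curl E) := contDiff_curl hE
  have hK2d : Differentiable ℝ K2 := hK2.differentiable (by norm_num)
  have hEd : Differentiable ℝ E := hE.differentiable (by norm_num)
  have hlap : lap ψ x = -(K2 x * vdiv E x + dotc (grad K2 x) (E x)) := by
    rw [lap_eq_vdiv_grad, hgrad,
      vdiv_sub ((contDiff_curl (n := 1) hcurl).differentiable one_ne_zero x)
        ((hK2d x).smul (hEd x)),
      vdiv_curl hcurl, vdiv_smul (hK2d x) (hEd x), zero_sub]
  rw [hlap, mul_div_cancel₀ _ (hK2ne x), neg_add_cancel]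
end
end

section
/- Let k ∈ ℝ and R > 0. There exist constants C > 0 and R₁ > R such that for all y ∈ ℝ³ with |y| ≤ R and all x ∈ ℝ³ with |x| ≥ R₁: | e^{ik|x−y|}/(4π|x−y|) − (e^{ik|x|}/(4π|x|))·e^{−ik(x/|x|)·y} | ≤ C/|x|². -/
/-
Write s = |x|, r = |x - y| and t = s - x·y/s. The far-field term equals e^{ikt}/(4πs), so the
difference is e^{ikr}/(4πr) - e^{ikt}/(4πs). Since |r - s| ≤ |y| the amplitudes differ by
O(|y|/s²). For the phases, r² - t² = |y|² - (x·y/s)² lies in [0, |y|²] while r + t ≥ s once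
s ≥ 2|y|, so 0 ≤ r - t ≤ |y|²/s, and the phase error |k||r - t| is divided by 4πs.
-/

noncomputable section

open Real Complex

lemma norm_exp_I_mul_sub_exp_I_mul_le (a b : ℝ) :
    ‖exp (I * a) - exp (I * b)‖ ≤ |a - b| := by
  have hfactor : exp (I * a) - exp (I * b) = exp (I * b) * (exp (I * ↑(a - b)) - 1) := by
    rw [mul_sub, ← Complex.exp_add]
    push_cast
    ring_nf
  rw [hfactor, norm_mul, norm_exp_I_mul_ofReal, one_mul]
  exact Real.norm_exp_I_mul_ofReal_sub_one_le

lemma norm_exp_div_sub_exp_div_le (k r t u v : ℝ) :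
    ‖exp (I * k * r) / u - exp (I * k * t) / v‖ ≤ |u⁻¹ - v⁻¹| + |k| * |r - t| / |v| := by
  have hsplit : exp (I * k * r) / u - exp (I * k * t) / v
      = exp (I * ↑(k * r)) * ↑(u⁻¹ - v⁻¹) + (exp (I * ↑(k * r)) - exp (I * ↑(k * t))) / v := by
    push_cast
    ring_nf
  calc ‖exp (I * k * r) / u - exp (I * k * t) / v‖
      ≤ ‖exp (I * ↑(k * r))‖ * ‖(↑(u⁻¹ - v⁻¹) : ℂ)‖
        + ‖exp (I * ↑(k * r)) - exp (I * ↑(k * t))‖ / ‖(v : ℂ)‖ := by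
        rw [hsplit, ← norm_mul, ← norm_div]
        exact norm_add_le _ _
    _ ≤ |u⁻¹ - v⁻¹| + |k * r - k * t| / |v| := by
        rw [norm_exp_I_mul_ofReal, one_mul, norm_real, Real.norm_eq_abs, norm_real,
          Real.norm_eq_abs]
        gcongr
        exact norm_exp_I_mul_sub_exp_I_mul_le _ _
    _ = |u⁻¹ - v⁻¹| + |k| * |r - t| / |v| := by rw [← mul_sub, abs_mul]

lemma abs_inv_sub_inv_le {r s ρ : ℝ} (hrs : |s - r| ≤ ρ) (hs : 2 * ρ ≤ s) :
    |r⁻¹ - s⁻¹| ≤ 2 * ρ / s ^ 2 := by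
  have hρ : 0 ≤ ρ := (abs_nonneg _).trans hrs
  obtain ⟨hsr, hrs'⟩ := abs_le.1 hrs
  rcases (show 0 ≤ s by linarith).eq_or_lt with rfl | hspos
  · obtain rfl : r = 0 := by linarith
    simp
  have hr : s / 2 ≤ r := by linarith
  have hrpos : 0 < r := by linarith
  rw [inv_sub_inv hrpos.ne' hspos.ne', abs_div, abs_of_pos (mul_pos hrpos hspos),
    div_le_div_iff₀ (mul_pos hrpos hspos) (by positivity)]
  calc |s - r| * s ^ 2 ≤ ρ * (s * s) := by rw [sq]; gcongr
    _ ≤ ρ * (2 * r * s) := by gcongr; linarith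
    _ = 2 * ρ * (r * s) := by ring

open RealInnerProductSpace

section InnerProductSpace

variable {E : Type*} [NormedAddCommGroup E] [InnerProductSpace ℝ E]

lemma sq_norm_sub_sub_sq_far_field (x y : E) (hx : x ≠ 0) :
    ‖x - y‖ ^ 2 - (‖x‖ - ⟪x, y⟫ / ‖x‖) ^ 2 = ‖y‖ ^ 2 - (⟪x, y⟫ / ‖x‖) ^ 2 := by
  have := norm_pos_iff.2 hx
  rw [norm_sub_sq_real]
  field_simp
  ring

lemma abs_norm_sub_sub_far_field_le (x y : E) (hxy : 2 * ‖y‖ ≤ ‖x‖) :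
    |‖x - y‖ - (‖x‖ - ⟪x, y⟫ / ‖x‖)| ≤ ‖y‖ ^ 2 / ‖x‖ := by
  rcases eq_or_ne x 0 with rfl | hx
  · obtain rfl : y = 0 := norm_le_zero_iff.1 (by rw [norm_zero] at hxy; linarith)
    simp
  have hsq := sq_norm_sub_sub_sq_far_field x y hx
  have hr := norm_sub_norm_le x y
  have hs : 0 < ‖x‖ := norm_pos_iff.2 hx
  have hproj : |⟪x, y⟫ / ‖x‖| ≤ ‖y‖ := by
    rw [abs_div, abs_of_pos hs, div_le_iff₀ hs, mul_comm]
    exact abs_real_inner_le_norm x y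
  set t := ‖x‖ - ⟪x, y⟫ / ‖x‖
  set p := ⟪x, y⟫ / ‖x‖
  have ht : ‖x‖ - ‖y‖ ≤ t := by linarith [le_abs_self p]
  have hp2 : p ^ 2 ≤ ‖y‖ ^ 2 := sq_le_sq' (abs_le.1 hproj).1 (abs_le.1 hproj).2
  have hy := norm_nonneg y
  have htr : t ≤ ‖x - y‖ := by
    apply le_of_sq_le_sq _ (by linarith)
    nlinarith
  rw [abs_of_nonneg (sub_nonneg.2 htr), le_div_iff₀ hs]
  nlinarith

lemma norm_kernel_sub_far_field_le (k : ℝ) (x y : E) (hxy : 2 * ‖y‖ ≤ ‖x‖) :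
    ‖exp (I * k * ‖x - y‖) / (4 * π * ‖x - y‖)
        - exp (I * k * ‖x‖) / (4 * π * ‖x‖) * exp (-(I * k) * ↑(⟪x, y⟫ / ‖x‖))‖
      ≤ (2 * ‖y‖ + |k| * ‖y‖ ^ 2) / (4 * π * ‖x‖ ^ 2) := by
  rcases eq_or_ne x 0 with rfl | hx
  · obtain rfl : y = 0 := norm_le_zero_iff.1 (by rw [norm_zero] at hxy; linarith)
    simp
  have hs : 0 < ‖x‖ := norm_pos_iff.2 hx
  have hfar : exp (I * k * ‖x‖) / (4 * π * ‖x‖) * exp (-(I * k) * ↑(⟪x, y⟫ / ‖x‖))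
      = exp (I * k * ↑(‖x‖ - ⟪x, y⟫ / ‖x‖)) / (4 * π * ‖x‖) := by
    rw [div_mul_eq_mul_div, ← Complex.exp_add]
    congr 2
    push_cast
    ring
  have hsplit := norm_exp_div_sub_exp_div_le k ‖x - y‖ (‖x‖ - ⟪x, y⟫ / ‖x‖)
    (4 * π * ‖x - y‖) (4 * π * ‖x‖)
  simp only [Complex.ofReal_mul, Complex.ofReal_ofNat] at hsplit
  have hdist : |‖x‖ - ‖x - y‖| ≤ ‖y‖ := by
    simpa using abs_norm_sub_norm_le x (x - y)
  have hinv := abs_inv_sub_inv_le hdist hxy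
  have hphase := abs_norm_sub_sub_far_field_le x y hxy
  rw [hfar]
  calc _ ≤ _ := hsplit
    _ = (4 * π)⁻¹ * |‖x - y‖⁻¹ - ‖x‖⁻¹|
          + |k| * |‖x - y‖ - (‖x‖ - ⟪x, y⟫ / ‖x‖)| / (4 * π * ‖x‖) := by
        rw [mul_inv (4 * π), mul_inv (4 * π), ← mul_sub, abs_mul, abs_of_pos (by positivity :
          (0 : ℝ) < (4 * π)⁻¹), abs_of_pos (by positivity : 0 < 4 * π * ‖x‖)]
    _ ≤ (4 * π)⁻¹ * (2 * ‖y‖ / ‖x‖ ^ 2) + |k| * (‖y‖ ^ 2 / ‖x‖) / (4 * π * ‖x‖) := by gcongr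
    _ = (2 * ‖y‖ + |k| * ‖y‖ ^ 2) / (4 * π * ‖x‖ ^ 2) := by field_simp

end InnerProductSpace

lemma EuclideanSpace.sum_mul_eq_inner {ι : Type*} [Fintype ι] (x y : EuclideanSpace ℝ ι) :
    ∑ j, x j * y j = ⟪x, y⟫ := by
  simp [PiLp.inner_apply, mul_comm]

theorem kernel_asymptotics
    (k : ℝ) (R : ℝ) (hR : 0 < R) :
    ∃ C > (0 : ℝ), ∃ R₁ > R, ∀ y : R3, ‖y‖ ≤ R → ∀ x : R3, R₁ ≤ ‖x‖ →
      ‖g k x y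
          - Complex.exp (Complex.I * (k : ℂ) * (‖x‖ : ℝ)) / (4 * (Real.pi : ℂ) * (‖x‖ : ℝ))
            * Complex.exp (-(Complex.I * (k : ℂ)) * (((∑ j, x j * y j) / ‖x‖ : ℝ) : ℂ))‖
        ≤ C / ‖x‖ ^ 2 := by
  refine ⟨(2 * R + |k| * R ^ 2) / (4 * π), by positivity, 2 * R, by linarith, ?_⟩
  intro y hy x hx
  rw [EuclideanSpace.sum_mul_eq_inner]
  calc _ ≤ (2 * ‖y‖ + |k| * ‖y‖ ^ 2) / (4 * π * ‖x‖ ^ 2) :=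
        norm_kernel_sub_far_field_le k x y (by linarith)
    _ ≤ (2 * R + |k| * R ^ 2) / (4 * π * ‖x‖ ^ 2) := by gcongr
    _ = (2 * R + |k| * R ^ 2) / (4 * π) / ‖x‖ ^ 2 := by rw [div_div]
end
end

section
/- (Uniqueness for the inverse problem data) Let k > 0 and R > 0, and let p ∈ L²(B_R), where B_R := {x ∈ ℝ³ : |x| ≤ R}. If ∫_{B_R} e^{ik(α−β)·y} p(y) dy = 0 for all unit vectors α, β ∈ S² = {x ∈ ℝ³ : |x| = 1}, then p = 0 almost everywhere on B_R. -/
/-!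
Writing a vector of length at most `2` as a difference of two unit vectors, the data say that
`F t = ∫_{B_R} e^{i t·y} p(y) dy` vanishes for `|t| ≤ 2k`. Splitting `p` into the positive and
negative parts of its real and imaginary parts, `F` becomes a combination of characteristic
functions of finite measures carried by `B_R`. Along each line through `0` such a characteristic
function is the complex moment generating function on the imaginary axis, hence real-analytic, so
agreement near `0` propagates to agreement everywhere, and characteristic functions determine
finite measures.
-/

noncomputable section

open Real Complex MeasureTheory

open Filter Topology ProbabilityTheory
open scoped RealInnerProductSpace ComplexConjugate

section UnitVectors

variable {E : Type*} [NormedAddCommGroup E] [InnerProductSpace ℝ E]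

lemma exists_norm_eq_one_inner_eq_zero [FiniteDimensional ℝ E] (hE : 2 ≤ Module.finrank ℝ E)
    (v : E) : ∃ u : E, ‖u‖ = 1 ∧ ⟪v, u⟫ = 0 := by
  have hspan : Module.finrank ℝ (ℝ ∙ v) ≤ 1 := by
    simpa using finrank_span_le_card (R := ℝ) ({v} : Set E)
  have hperp : (ℝ ∙ v)ᗮ ≠ ⊥ := by
    intro hbot
    have := (ℝ ∙ v).finrank_add_finrank_orthogonal
    rw [hbot, finrank_bot] at this
    omega
  obtain ⟨w, hw, hw0⟩ := Submodule.exists_mem_ne_zero_of_ne_bot hperp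
  refine ⟨‖w‖⁻¹ • w, norm_smul_inv_norm hw0, ?_⟩
  rw [inner_smul_right, Submodule.mem_orthogonal_singleton_iff_inner_right.mp hw, mul_zero]

lemma exists_sub_eq_of_norm_le_two [FiniteDimensional ℝ E] (hE : 2 ≤ Module.finrank ℝ E)
    {v : E} (hv : ‖v‖ ≤ 2) : ∃ α β : E, ‖α‖ = 1 ∧ ‖β‖ = 1 ∧ α - β = v := by
  obtain ⟨u, hu, hvu⟩ := exists_norm_eq_one_inner_eq_zero hE v
  set w : E := √(1 - ‖v‖ ^ 2 / 4) • u
  have hw : ‖w‖ ^ 2 = 1 - ‖v‖ ^ 2 / 4 := by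
    rw [norm_smul, hu, mul_one, Real.norm_of_nonneg (Real.sqrt_nonneg _),
      Real.sq_sqrt (by nlinarith [norm_nonneg v])]
  have hunit (c : ℝ) (hc : c ^ 2 = 1 / 4) : ‖c • v + w‖ = 1 := by
    have horth : ⟪c • v, w⟫ = 0 := by
      rw [real_inner_smul_left, real_inner_smul_right, hvu, mul_zero, mul_zero]
    rw [← pow_eq_one_iff_of_nonneg (norm_nonneg _) two_ne_zero, norm_add_sq_real, horth,
      hw, norm_smul, mul_pow, Real.norm_eq_abs, sq_abs, hc]
    ring
  exact ⟨(1 / 2 : ℝ) • v + w, (-1 / 2 : ℝ) • v + w, hunit _ (by norm_num), hunit _ (by norm_num),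
    by module⟩

end UnitVectors

section CharFun

variable {E : Type*} [NormedAddCommGroup E] [InnerProductSpace ℝ E] [MeasurableSpace E]
  {P : Measure E} {R : ℝ}

lemma integrableExpSet_inner_eq_univ [BorelSpace E] [IsFiniteMeasure P] (hP : ∀ᵐ x ∂P, ‖x‖ ≤ R)
    (t : E) :
    integrableExpSet (fun x => ⟪x, t⟫) P = Set.univ := by
  refine Set.eq_univ_of_forall fun s => Integrable.of_bound (by fun_prop)
    (Real.exp (|s| * (‖t‖ * R))) ?_
  filter_upwards [hP] with x hx
  rw [Real.norm_of_nonneg (Real.exp_pos _).le, Real.exp_le_exp]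
  calc s * ⟪x, t⟫ ≤ |s| * |⟪x, t⟫| := by rw [← abs_mul]; exact le_abs_self _
    _ ≤ |s| * (‖t‖ * R) := by
      gcongr
      rw [real_inner_comm]
      exact (abs_real_inner_le_norm t x).trans (by gcongr)

lemma complexMGF_inner_mul_I (P : Measure E) (t : E) (s : ℝ) :
    complexMGF (fun x => ⟪x, t⟫) P (s * I) = charFun P (s • t) := by
  simp only [complexMGF, charFun_apply, inner_smul_right, ofReal_mul]
  congr with x
  rw [mul_right_comm]

lemma analyticOnNhd_charFun_smul [BorelSpace E] [IsFiniteMeasure P] (hP : ∀ᵐ x ∂P, ‖x‖ ≤ R)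
    (t : E) :
    AnalyticOnNhd ℝ (fun s : ℝ => charFun P (s • t)) Set.univ := by
  intro s _
  simp_rw [← complexMGF_inner_mul_I]
  have hMGF : AnalyticAt ℂ (complexMGF (fun x => ⟪x, t⟫) P) (s * I) :=
    analyticAt_complexMGF (by simp [integrableExpSet_inner_eq_univ hP])
  exact hMGF.restrictScalars.comp (f := fun s : ℝ => (s : ℂ) * I)
    ((ofRealCLM.analyticAt s).mul analyticAt_const)

theorem Measure.ext_of_charFun_eventuallyEq [BorelSpace E] [CompleteSpace E]
    [SecondCountableTopology E] {P' : Measure E} [IsFiniteMeasure P] [IsFiniteMeasure P']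
    (hP : ∀ᵐ x ∂P, ‖x‖ ≤ R) (hP' : ∀ᵐ x ∂P', ‖x‖ ≤ R) (h : charFun P =ᶠ[𝓝 0] charFun P') : P = P' := by
  refine Measure.ext_of_charFun (funext fun t => ?_)
  have hline : Tendsto (fun s : ℝ => s • t) (𝓝 0) (𝓝 0) :=
    (continuous_id.smul continuous_const).tendsto' 0 0 (zero_smul ℝ t)
  simpa using congrFun ((analyticOnNhd_charFun_smul hP t).eq_of_eventuallyEq
    (analyticOnNhd_charFun_smul hP' t) (hline.eventually h)) 1

end CharFun

section Density

variable {E : Type*} [NormedAddCommGroup E] [InnerProductSpace ℝ E] [MeasurableSpace E]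
  {μ : Measure E}

lemma integrable_cexp_inner_mul_I_mul [OpensMeasurableSpace E] {f : E → ℂ}
    (hf : Integrable f μ) (t : E) : Integrable (fun x => cexp (⟪x, t⟫ * I) * f x) μ :=
  hf.bdd_mul (c := 1) (by fun_prop) (ae_of_all _ fun x => (norm_exp_ofReal_mul_I _).le)

lemma charFun_withDensity_ofReal {g : E → ℝ} (hg : AEMeasurable g μ) (t : E) :
    charFun (μ.withDensity fun x => ENNReal.ofReal (g x)) t
      = ∫ x, cexp (⟪x, t⟫ * I) * (max (g x) 0 : ℝ) ∂μ := by
  rw [charFun_apply, integral_withDensity_eq_integral_toReal_smul₀ hg.ennreal_ofReal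
    (ae_of_all _ fun _ => ENNReal.ofReal_lt_top)]
  congr with x
  rw [ENNReal.toReal_ofReal', Complex.real_smul, mul_comm]

variable [BorelSpace E] [CompleteSpace E] [SecondCountableTopology E] {R : ℝ}

lemma ae_eq_zero_of_integral_cexp_inner_mul_ofReal_eq_zero {g : E → ℝ} (hg : Integrable g μ)
    (hμ : ∀ᵐ x ∂μ, ‖x‖ ≤ R) (h : ∀ᶠ t in 𝓝 0, ∫ x, cexp (⟪x, t⟫ * I) * g x ∂μ = 0) :
    g =ᵐ[μ] 0 := by
  have hneg : Integrable (fun x => -g x) μ := hg.neg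
  set P := μ.withDensity fun x => ENNReal.ofReal (g x)
  set P' := μ.withDensity fun x => ENNReal.ofReal (-g x)
  have : IsFiniteMeasure P := isFiniteMeasure_withDensity_ofReal hg.2
  have : IsFiniteMeasure P' := isFiniteMeasure_withDensity_ofReal hneg.2
  have hPP' : P = P' := by
    refine Measure.ext_of_charFun_eventuallyEq
      ((withDensity_absolutelyContinuous _ _).ae_le hμ)
      ((withDensity_absolutelyContinuous _ _).ae_le hμ) ?_
    filter_upwards [h] with t ht
    have hpos := integrable_cexp_inner_mul_I_mul (f := fun x => (max (g x) 0 : ℝ))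
      hg.pos_part.ofReal t
    have hnegpos := integrable_cexp_inner_mul_I_mul (f := fun x => (max (-g x) 0 : ℝ))
      hneg.pos_part.ofReal t
    rw [charFun_withDensity_ofReal hg.aemeasurable, charFun_withDensity_ofReal hneg.aemeasurable,
      ← sub_eq_zero, ← integral_sub hpos hnegpos]
    simpa only [← mul_sub, ← ofReal_sub, max_zero_sub_max_neg_zero_eq_self] using ht
  have hdens := (withDensity_eq_iff hg.aemeasurable.ennreal_ofReal
    hneg.aemeasurable.ennreal_ofReal hg.lintegral_lt_top.ne).1 hPP'
  filter_upwards [hdens] with x hx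
  have hmax := congrArg ENNReal.toReal hx
  simp only [ENNReal.toReal_ofReal'] at hmax
  rw [Pi.zero_apply, ← max_zero_sub_max_neg_zero_eq_self (g x), hmax, sub_self]

lemma ae_eq_zero_of_integral_cexp_inner_mul_eq_zero {p : E → ℂ} (hp : Integrable p μ)
    (hμ : ∀ᵐ x ∂μ, ‖x‖ ≤ R) (h : ∀ᶠ t in 𝓝 0, ∫ x, cexp (⟪x, t⟫ * I) * p x ∂μ = 0) :
    p =ᵐ[μ] 0 := by
  have hp_conj : Integrable (fun x => conj (p x)) μ :=
    conjCLE.toContinuousLinearMap.integrable_comp hp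
  have hint := integrable_cexp_inner_mul_I_mul hp
  have hint_conj := integrable_cexp_inner_mul_I_mul hp_conj
  have hconj : ∀ᶠ t in 𝓝 0, ∫ x, cexp (⟪x, t⟫ * I) * conj (p x) ∂μ = 0 := by
    have hneg : Tendsto (fun t : E => -t) (𝓝 0) (𝓝 0) := by simpa using tendsto_neg (0 : E)
    filter_upwards [hneg.eventually h] with t ht
    simpa [← integral_conj, ← exp_conj, inner_neg_right] using congrArg conj ht
  have hre : ∀ᶠ t in 𝓝 0, ∫ x, cexp (⟪x, t⟫ * I) * ((p x).re : ℂ) ∂μ = 0 := by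
    filter_upwards [h, hconj] with t h₁ h₂
    simp_rw [re_eq_add_conj, mul_div_assoc', mul_add]
    rw [integral_div, integral_add (hint t) (hint_conj t), h₁, h₂]
    simp
  have him : ∀ᶠ t in 𝓝 0, ∫ x, cexp (⟪x, t⟫ * I) * ((p x).im : ℂ) ∂μ = 0 := by
    filter_upwards [h, hconj] with t h₁ h₂
    simp_rw [im_eq_sub_conj, mul_div_assoc', mul_sub]
    rw [integral_div, integral_sub (hint t) (hint_conj t), h₁, h₂]
    simp
  filter_upwards [ae_eq_zero_of_integral_cexp_inner_mul_ofReal_eq_zero hp.re hμ hre,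
    ae_eq_zero_of_integral_cexp_inner_mul_ofReal_eq_zero hp.im hμ him] with x hx hy
  exact Complex.ext hx hy

end Density

theorem inverse_data_uniqueness_general
    (k : ℝ) (hk : 0 < k) (R : ℝ) (p : R3 → ℂ)
    (hp : MemLp p 2 (volume.restrict (Metric.closedBall (0 : R3) R)))
    (hzero : ∀ α β : R3, ‖α‖ = 1 → ‖β‖ = 1 →
      ∫ y in Metric.closedBall (0 : R3) R,
        Complex.exp (Complex.I * (k : ℂ) * ((∑ j, (α j - β j) * y j : ℝ) : ℂ)) * p y = 0) :
    ∀ᵐ y ∂(volume.restrict (Metric.closedBall (0 : R3) R)), p y = 0 := by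
  have : IsFiniteMeasure (volume.restrict (Metric.closedBall (0 : R3) R)) :=
    isFiniteMeasure_restrict.2 measure_closedBall_lt_top.ne
  refine ae_eq_zero_of_integral_cexp_inner_mul_eq_zero (hp.integrable one_le_two) (R := R) ?_ ?_
  · filter_upwards [ae_restrict_mem measurableSet_closedBall] with y hy
    simpa using hy
  · filter_upwards [Metric.closedBall_mem_nhds (0 : R3) (by positivity : 0 < 2 * k)] with t ht
    have hkt : ‖k⁻¹ • t‖ ≤ 2 := by
      rw [norm_smul, norm_inv, Real.norm_of_nonneg hk.le, inv_mul_le_iff₀ hk]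
      simpa [mul_comm] using ht
    obtain ⟨α, β, hα, hβ, hαβ⟩ := exists_sub_eq_of_norm_le_two (by simp) hkt
    have hphase (y : R3) : (⟪y, t⟫ : ℂ) * I = I * k * ((∑ j, (α j - β j) * y j : ℝ) : ℂ) := by
      rw [show t = k • (α - β) by rw [hαβ, smul_inv_smul₀ hk.ne'], inner_smul_right]
      simp only [PiLp.inner_apply, PiLp.sub_apply, RCLike.inner_apply, ringHom_apply, ofReal_mul,
        ofReal_sum, ofReal_sub, mul_comm]
      ring
    simp_rw [hphase]
    exact hzero α β hα hβ

theorem inverse_data_uniqueness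
    (k : ℝ) (hk : 0 < k) (R : ℝ) (hR : 0 < R) (p : R3 → ℂ)
    (hp : MemLp p 2 (volume.restrict (Metric.closedBall (0 : R3) R)))
    (hzero : ∀ α β : R3, ‖α‖ = 1 → ‖β‖ = 1 →
      ∫ y in Metric.closedBall (0 : R3) R,
        Complex.exp (Complex.I * (k : ℂ) * ((∑ j, (α j - β j) * y j : ℝ) : ℂ)) * p y = 0) :
    ∀ᵐ y ∂(volume.restrict (Metric.closedBall (0 : R3) R)), p y = 0 :=
  inverse_data_uniqueness_general k hk R p hp hzero
end
end
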